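/- Let W be a d×d matrix A₂ weight on ℝ and let W_n(x) = φ_n(W(x)) be the eigenvalue truncation of W, where φ_n(t) = min(max(t, 1/n), n) is applied via the functional calculus for Hermitian matrices. Then for every bounded interval I, Tr(⟨W_n⟩_I ⟨W_n^{-1}⟩_I) ≤ 2d + Tr(⟨W⟩_I ⟨W^{-1}⟩_I). -/

import Mathlib

open MeasureTheory Matrix Filter
open scoped ENNReal ComplexOrder

noncomputable section

abbrev Vec (d : ℕ) := Fin d → ℂ
abbrev Mat (d : ℕ) := Matrix (Fin d) (Fin d) ℂ

/-- The standard dyadic interval `[2^{-k} n, 2^{-k}(n+1))`. -/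
def dyadI (k n : ℤ) : Set ℝ := Set.Ico ((2:ℝ) ^ (-k) * n) ((2:ℝ) ^ (-k) * (n + 1))

/-- The Haar function of the dyadic interval indexed by `(k, n)`. -/
def haar (k n : ℤ) (x : ℝ) : ℝ :=
  Real.sqrt ((2:ℝ) ^ k) *
    ((dyadI (k+1) (2*n+1)).indicator (fun _ => (1:ℝ)) x -
      (dyadI (k+1) (2*n)).indicator (fun _ => (1:ℝ)) x)

/-- The non-cancellative Haar function `h_I^1 = 1_I / |I|`. -/
def hone (k n : ℤ) (x : ℝ) : ℝ := (dyadI k n).indicator (fun _ => (2:ℝ) ^ k) x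

/-- Haar coefficient `f̂(I) = ∫ f · h_I`. -/
def fhat {d : ℕ} (f : ℝ → Vec d) (k n : ℤ) : Vec d :=
  ∫ x in dyadI k n, ((haar k n x : ℝ) : ℂ) • f x

/-- Average of a vector-valued function over a dyadic interval. -/
def vavg {d : ℕ} (g : ℝ → Vec d) (k n : ℤ) : Vec d :=
  (2:ℝ) ^ k • ∫ x in dyadI k n, g x

/-- Average `⟨W⟩_I` of a matrix-valued function over a dyadic interval. -/
def avgD {d : ℕ} (W : ℝ → Mat d) (k n : ℤ) : Mat d :=
  Matrix.of fun i j => (2:ℝ) ^ k • ∫ x in dyadI k n, W x i j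

/-- Average `⟨W⟩_{[a,b)}` of a matrix-valued function over an interval. -/
def avgI {d : ℕ} (W : ℝ → Mat d) (a b : ℝ) : Mat d :=
  Matrix.of fun i j => (b - a)⁻¹ • ∫ x in Set.Ico a b, W x i j

/-- Inner product on `ℂ^d`, linear in the first entry. -/
def ip {d : ℕ} (u v : Vec d) : ℂ := ∑ i, u i * (starRingEnd ℂ) (v i)

/-- Squared Euclidean norm on `ℂ^d`. -/
def vnSq {d : ℕ} (u : Vec d) : ℝ := ∑ i, ‖u i‖ ^ 2

/-- Quadratic form `⟨A u, u⟩`. -/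
def qf {d : ℕ} (A : Mat d) (u : Vec d) : ℝ := (ip (A.mulVec u) u).re

/-- Operator norm of a matrix acting on `ℂ^d`. -/
def mOpNorm {d : ℕ} (A : Mat d) : ℝ := ‖Matrix.toEuclideanCLM (𝕜 := ℂ) A‖

/-- The positive semidefinite square root (junk value `0` if not psd). -/
def msqrt {d : ℕ} (A : Mat d) : Mat d :=
  @dite _ A.PosSemidef (Classical.dec _) (fun h => (h.1.eigenvectorUnitary : Mat d) *
    Matrix.diagonal (fun i => ((Real.sqrt (h.1.eigenvalues i) : ℝ) : ℂ)) *
    (star (h.1.eigenvectorUnitary : Mat d))) (fun _ => 0)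

/-- `‖f‖²_{L²(W)}`, valued in `[0,∞]`. -/
def wNormSq {d : ℕ} (W : ℝ → Mat d) (f : ℝ → Vec d) : ℝ≥0∞ :=
  ∫⁻ x, ENNReal.ofReal (qf (W x) (f x))

/-- `‖f‖²_{L²(ℝ,ℂ^d)}`, valued in `[0,∞]`. -/
def l2NormSq {d : ℕ} (f : ℝ → Vec d) : ℝ≥0∞ :=
  ∫⁻ x, ENNReal.ofReal (vnSq (f x))

/-- The weighted square function sum `∑_{I ∈ 𝒟} ⟨⟨W⟩_I f̂(I), f̂(I)⟩`. -/
def sqSum {d : ℕ} (W : ℝ → Mat d) (f : ℝ → Vec d) : ℝ≥0∞ :=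
  ∑' p : ℤ × ℤ, ENNReal.ofReal (qf (avgD W p.1 p.2) (fhat f p.1 p.2))

/-- `W` is a matrix weight: locally integrable entries, a.e. positive semidefinite values. -/
def IsMatrixWeight {d : ℕ} (W : ℝ → Mat d) : Prop :=
  (∀ i j, LocallyIntegrable (fun x => W x i j) volume) ∧
  (∀ᵐ x ∂volume, (W x).PosSemidef)

/-- `K` bounds the `A₂` characteristic `sup_I ‖⟨W⟩_I^{1/2} ⟨W^{-1}⟩_I^{1/2}‖²` of `W`. -/
def A2Bound {d : ℕ} (W : ℝ → Mat d) (K : ℝ) : Prop :=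
  ∀ a b : ℝ, a < b →
    mOpNorm (msqrt (avgI W a b) * msqrt (avgI (fun x => (W x)⁻¹) a b)) ^ 2 ≤ K

/-- `W` is a matrix `A₂` weight with `A₂` characteristic at most `K` (and `1 ≤ K`,
as the characteristic is always at least `1`).  The positive definiteness of the
averages of `W` and `W⁻¹` is recorded as well. -/
def IsA2Weight {d : ℕ} (W : ℝ → Mat d) (K : ℝ) : Prop :=
  IsMatrixWeight W ∧ (∀ᵐ x ∂volume, IsUnit (W x).det) ∧
  IsMatrixWeight (fun x => (W x)⁻¹) ∧ 1 ≤ K ∧ A2Bound W K ∧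
  (∀ a b : ℝ, a < b → (avgI W a b).PosDef) ∧
  (∀ a b : ℝ, a < b → (avgI (fun x => (W x)⁻¹) a b).PosDef) ∧
  (∀ k n : ℤ, (avgD W k n).PosDef) ∧
  (∀ k n : ℤ, (avgD (fun x => (W x)⁻¹) k n).PosDef)


/-- The clamping function `φ_m(t) = min (max t (1/m)) m`. -/
def clampFun (m : ℕ) (t : ℝ) : ℝ := min (max t ((m:ℝ)⁻¹)) (m:ℝ)

/-- The eigenvalue truncation `W_m(x) = φ_m(W(x))`, via the functional calculus
for Hermitian matrices (junk value `0` at the null set where `W x` is not Hermitian). -/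
def truncW {d : ℕ} (W : ℝ → Mat d) (m : ℕ) (x : ℝ) : Mat d :=
  @dite _ (W x).IsHermitian (Classical.dec _) (fun h => h.cfc (clampFun m)) (fun _ => 0)

/-! Diagonalising `A = U diag(α) U*` and `B = V diag(β) V*` gives
`re tr (f(A) g(B)) = ∑ᵢⱼ f(αᵢ) g(βⱼ) |(U*V)ᵢⱼ|²`, with weights `|(U*V)ᵢⱼ|²` whose rows sum to `1`.
The clamp `φ` is nondecreasing and `φ(t)/t` is nonincreasing, so `φ(α)/φ(β) ≤ max 1 (α/β) ≤ 1 + α/β`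
and hence `re tr (φ(A) φ(B)⁻¹) ≤ d + re tr (A B⁻¹)` for `A, B ≥ 0`, `B` invertible. Since
`tr (⟨F⟩_I ⟨G⟩_I)` is the average of `tr (F x G y)` over `(x, y) ∈ I × I`, averaging this pointwise
inequality for `A = W x`, `B = W y` gives the bound. -/

open scoped ProbabilityTheory

section Clamp

variable {m : ℕ}

lemma inv_le_clampFun (hm : 0 < m) (t : ℝ) : (m : ℝ)⁻¹ ≤ clampFun m t := by
  have : (m : ℝ)⁻¹ ≤ m := by
    have : (1 : ℝ) ≤ m := by exact_mod_cast hm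
    exact (inv_le_one_of_one_le₀ this).trans this
  exact le_min (le_max_right _ _) this

lemma clampFun_pos (hm : 0 < m) (t : ℝ) : 0 < clampFun m t :=
  (inv_pos.2 (by exact_mod_cast hm)).trans_le (inv_le_clampFun hm t)

lemma abs_clampFun_le (hm : 0 < m) (t : ℝ) : |clampFun m t| ≤ m := by
  rw [abs_of_pos (clampFun_pos hm t)]
  exact min_le_right _ _

lemma abs_inv_clampFun_le (hm : 0 < m) (t : ℝ) : |(clampFun m t)⁻¹| ≤ m := by
  rw [abs_of_pos (inv_pos.2 (clampFun_pos hm t))]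
  exact inv_le_of_inv_le₀ (by exact_mod_cast hm) (inv_le_clampFun hm t)

lemma monotone_clampFun : Monotone (clampFun m) := fun _ _ h =>
  min_le_min (max_le_max h le_rfl) le_rfl

lemma continuous_clampFun : Continuous (clampFun m) := by unfold clampFun; fun_prop

/-- Multiplying `clampFun m α` by `β ≥ 0` scales its argument and both thresholds by `β`;
raising the thresholds from `β`-multiples to `α`-multiples can only increase the result. -/
lemma clampFun_mul_le_mul_clampFun {α β : ℝ} (hβ : 0 ≤ β) (h : β ≤ α) :
    clampFun m α * β ≤ clampFun m β * α := by
  have hα : 0 ≤ α := hβ.trans h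
  calc clampFun m α * β = min (max (α * β) ((m : ℝ)⁻¹ * β)) (m * β) := by
        simp only [clampFun, min_mul_of_nonneg _ _ hβ, max_mul_of_nonneg _ _ hβ]
    _ ≤ min (max (α * β) ((m : ℝ)⁻¹ * α)) (m * α) := by gcongr
    _ = clampFun m β * α := by
        simp only [clampFun, min_mul_of_nonneg _ _ hα, max_mul_of_nonneg _ _ hα, mul_comm β α]

lemma clampFun_mul_inv_le (hm : 0 < m) {α β : ℝ} (hα : 0 ≤ α) (hβ : 0 < β) :
    clampFun m α * (clampFun m β)⁻¹ ≤ 1 + α * β⁻¹ := by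
  have hφβ := clampFun_pos hm β
  rcases le_total α β with h | h
  · have : clampFun m α * (clampFun m β)⁻¹ ≤ 1 := by
      rw [mul_inv_le_iff₀ hφβ, one_mul]; exact monotone_clampFun h
    linarith [mul_nonneg hα (inv_nonneg.2 hβ.le)]
  · have : clampFun m α * (clampFun m β)⁻¹ ≤ α * β⁻¹ := by
      rw [mul_inv_le_iff₀ hφβ, mul_comm, ← mul_assoc, le_mul_inv_iff₀ hβ]
      exact clampFun_mul_le_mul_clampFun hβ.le h
    linarith

end Clamp

section SpectralTrace

variable {n 𝕜 : Type*} [Fintype n] [DecidableEq n] [RCLike 𝕜]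

lemma Matrix.sum_norm_sq_apply_eq_one {U : Matrix n n 𝕜} (hU : U ∈ unitaryGroup n 𝕜) (i : n) :
    ∑ j, ‖U i j‖ ^ 2 = 1 := by
  have h := congr_fun (congr_fun (mem_unitaryGroup_iff.1 hU) i) i
  simp only [mul_apply, star_apply, RCLike.star_def, RCLike.mul_conj, one_apply_eq] at h
  exact_mod_cast h

lemma Matrix.IsHermitian.re_trace_cfc_mul_cfc {A B : Matrix n n 𝕜} (hA : A.IsHermitian)
    (hB : B.IsHermitian) (f g : ℝ → ℝ) :
    RCLike.re (cfc f A * cfc g B).trace = ∑ i, ∑ j, f (hA.eigenvalues i) * g (hB.eigenvalues j) *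
      ‖(star (hA.eigenvectorUnitary : Matrix n n 𝕜) * hB.eigenvectorUnitary) i j‖ ^ 2 := by
  set U : Matrix n n 𝕜 := (hA.eigenvectorUnitary : Matrix n n 𝕜)
  set V : Matrix n n 𝕜 := (hB.eigenvectorUnitary : Matrix n n 𝕜)
  set P := star U * V
  have hcycle : (cfc f A * cfc g B).trace = (diagonal (RCLike.ofReal ∘ f ∘ hA.eigenvalues) *
      (P * diagonal (RCLike.ofReal ∘ g ∘ hB.eigenvalues) * star P)).trace := by
    have : cfc f A * cfc g B = U * (diagonal (RCLike.ofReal ∘ f ∘ hA.eigenvalues) *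
        (star U * (V * (diagonal (RCLike.ofReal ∘ g ∘ hB.eigenvalues) * star V)))) := by
      simp only [hA.cfc_eq, hB.cfc_eq, IsHermitian.cfc, Unitary.conjStarAlgAut_apply, U, V,
        Matrix.mul_assoc]
    rw [this, trace_mul_comm]
    simp only [P, star_mul, star_star, Matrix.mul_assoc]
  rw [hcycle, trace, map_sum]
  refine Finset.sum_congr rfl fun i _ => ?_
  rw [diag_apply, diagonal_mul, mul_apply]
  simp only [mul_diagonal, star_apply, Function.comp_apply, Finset.mul_sum, map_sum]
  refine Finset.sum_congr rfl fun j _ => ?_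
  rw [mul_comm (P i j), mul_assoc, mul_assoc, RCLike.star_def, RCLike.mul_conj]
  norm_cast

lemma Matrix.IsHermitian.re_trace_cfc_mul_cfc_le {A B : Matrix n n 𝕜} (hA : A.IsHermitian)
    (hB : B.IsHermitian) {f g f' g' : ℝ → ℝ} {c : ℝ}
    (h : ∀ s ∈ spectrum ℝ A, ∀ t ∈ spectrum ℝ B, f s * g t ≤ c + f' s * g' t) :
    RCLike.re (cfc f A * cfc g B).trace
      ≤ Fintype.card n * c + RCLike.re (cfc f' A * cfc g' B).trace := by
  have hP : star (hA.eigenvectorUnitary : Matrix n n 𝕜) * hB.eigenvectorUnitary ∈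
      unitaryGroup n 𝕜 :=
    (star hA.eigenvectorUnitary * hB.eigenvectorUnitary).2
  have hα : ∀ i, hA.eigenvalues i ∈ spectrum ℝ A := fun i =>
    hA.spectrum_real_eq_range_eigenvalues ▸ Set.mem_range_self i
  have hβ : ∀ j, hB.eigenvalues j ∈ spectrum ℝ B := fun j =>
    hB.spectrum_real_eq_range_eigenvalues ▸ Set.mem_range_self j
  rw [hA.re_trace_cfc_mul_cfc hB, hA.re_trace_cfc_mul_cfc hB]
  calc _ ≤ ∑ i, ∑ j, (c + f' (hA.eigenvalues i) * g' (hB.eigenvalues j)) *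
        ‖(star (hA.eigenvectorUnitary : Matrix n n 𝕜) * hB.eigenvectorUnitary) i j‖ ^ 2 := by
        gcongr with i _ j _
        exact h _ (hα i) _ (hβ j)
    _ = _ := by
        simp only [add_mul, Finset.sum_add_distrib, ← Finset.mul_sum, sum_norm_sq_apply_eq_one hP]
        simp [mul_comm]

lemma Matrix.inv_cfc_eq_cfc_inv (A : Matrix n n 𝕜) {f : ℝ → ℝ} (hf : Continuous f)
    (hf₀ : ∀ t, f t ≠ 0) : (cfc f A)⁻¹ = cfc (fun t => (f t)⁻¹) A := by
  by_cases hA : IsSelfAdjoint A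
  · rw [nonsing_inv_eq_ringInverse, cfc_inv f A (fun t _ => hf₀ t) hf.continuousOn]
  · simp [cfc_apply_of_not_predicate A hA]

lemma Matrix.PosSemidef.re_trace_cfc_clampFun_mul_inv_le {m : ℕ} (hm : 0 < m)
    {A B : Matrix n n 𝕜} (hA : A.PosSemidef) (hB : B.PosSemidef) (hBu : IsUnit B) :
    RCLike.re (cfc (clampFun m) A * (cfc (clampFun m) B)⁻¹).trace
      ≤ Fintype.card n + RCLike.re (A * B⁻¹).trace := by
  have hspecA : ∀ s ∈ spectrum ℝ A, 0 ≤ s := by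
    rw [hA.1.spectrum_real_eq_range_eigenvalues]
    rintro _ ⟨i, rfl⟩
    exact hA.eigenvalues_nonneg i
  have hspecB : ∀ t ∈ spectrum ℝ B, 0 < t := by
    rw [hB.1.spectrum_real_eq_range_eigenvalues]
    rintro _ ⟨j, rfl⟩
    exact (hB.eigenvalues_nonneg j).lt_of_ne' fun h => spectrum.zero_notMem ℝ hBu
      (h ▸ hB.1.spectrum_real_eq_range_eigenvalues ▸ Set.mem_range_self j)
  have key := hA.1.re_trace_cfc_mul_cfc_le hB.1 (f := clampFun m)
    (g := fun t => (clampFun m t)⁻¹) (f' := fun s => s) (g' := fun t => t⁻¹) fun s hs t ht =>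
      clampFun_mul_inv_le hm (hspecA s hs) (hspecB t ht)
  rwa [cfc_id' ℝ A hA.1.isSelfAdjoint, cfc_ringInverse_id B hBu hB.1.isSelfAdjoint,
    ← nonsing_inv_eq_ringInverse, mul_one,
    ← inv_cfc_eq_cfc_inv B continuous_clampFun fun t => (clampFun_pos hm t).ne'] at key

end SpectralTrace

open Polynomial in
lemma exists_polynomial_tendstoUniformlyOn_of_isBounded {f : ℝ → ℝ} (hf : Continuous f) :
    ∃ p : ℕ → ℝ[X], ∀ s : Set ℝ, Bornology.IsBounded s →
      TendstoUniformlyOn (fun k t => (p k).eval t) f atTop s := by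
  have : ∀ k : ℕ, ∃ p : ℝ[X], ∀ t ∈ Set.Icc (-(k : ℝ)) k, |p.eval t - f t| < 1 / (k + 1) :=
    fun k => exists_polynomial_near_of_continuousOn _ _ f hf.continuousOn _ (by positivity)
  choose p hp using this
  refine ⟨p, fun s hs => Metric.tendstoUniformlyOn_iff.2 fun ε hε => ?_⟩
  obtain ⟨R, hR⟩ := hs.subset_closedBall 0
  filter_upwards [eventually_ge_atTop ⌈R⌉₊,
    tendsto_one_div_add_atTop_nhds_zero_nat.eventually (gt_mem_nhds hε)] with k hk hkε t ht
  have htR : |t| ≤ k := by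
    have := mem_closedBall_zero_iff.1 (hR ht)
    exact this.trans ((Nat.le_ceil R).trans (by exact_mod_cast hk))
  rw [dist_comm, Real.dist_eq]
  exact (hp k t (abs_le.1 htR)).trans hkε

section Measurability

variable {n 𝕜 α : Type*} [Fintype n] [DecidableEq n] [RCLike 𝕜] [MeasurableSpace α]
  {μ : Measure α}

lemma Matrix.aestronglyMeasurable_of_apply {W : α → Matrix n n 𝕜}
    (hW : ∀ i j, AEStronglyMeasurable (fun x => W x i j) μ) : AEStronglyMeasurable W μ := by
  have : W = fun x => ∑ i, ∑ j, W x i j • single i j (1 : 𝕜) := by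
    ext1 x
    simp only [smul_single, smul_eq_mul, mul_one]
    exact matrix_eq_sum_single (W x)
  rw [this]
  exact Finset.aestronglyMeasurable_fun_sum _ fun i _ =>
    Finset.aestronglyMeasurable_fun_sum _ fun j _ => (hW i j).smul_const _

/-- Approximating `f` by polynomials `p k` uniformly on the (finite) spectra, `cfc f (W x)` is an
a.e. limit of the measurable functions `aeval (W x) (p k)`. -/
lemma Matrix.aestronglyMeasurable_cfc_apply {W : α → Matrix n n 𝕜}
    (hW : ∀ i j, AEStronglyMeasurable (fun x => W x i j) μ)
    (hherm : ∀ᵐ x ∂μ, (W x).IsHermitian) {f : ℝ → ℝ} (hf : Continuous f) (i j : n) :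
    AEStronglyMeasurable (fun x => cfc f (W x) i j) μ := by
  obtain ⟨p, hp⟩ := exists_polynomial_tendstoUniformlyOn_of_isBounded hf
  refine aestronglyMeasurable_of_tendsto_ae atTop (f := fun k x => Polynomial.aeval (W x) (p k) i j)
    (fun k => (((p k).continuous_aeval).matrix_elem i j).comp_aestronglyMeasurable
      (aestronglyMeasurable_of_apply hW)) ?_
  filter_upwards [hherm] with x hx
  have hbdd : Bornology.IsBounded (spectrum ℝ (W x)) :=
    hx.spectrum_real_eq_range_eigenvalues ▸ (Set.finite_range _).isBounded
  have := tendsto_cfc_fun (a := W x) (hp _ hbdd)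
    (Eventually.of_forall fun k => (p k).continuous.continuousOn)
  simp only [cfc_polynomial _ _ hx.isSelfAdjoint] at this
  exact ((continuous_id.matrix_elem i j).tendsto _).comp this

lemma Matrix.norm_cfc_apply_le (A : Matrix n n 𝕜) {f : ℝ → ℝ} {C : ℝ} (hf : ∀ t, |f t| ≤ C)
    (i j : n) : ‖cfc f A i j‖ ≤ Fintype.card n * C := by
  have hC : 0 ≤ C := (abs_nonneg _).trans (hf 0)
  by_cases hA : IsSelfAdjoint A
  · rw [hA.isHermitian.cfc_eq, IsHermitian.cfc, Unitary.conjStarAlgAut_apply, mul_apply]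
    refine (norm_sum_le _ _).trans ?_
    rw [← Finset.card_univ, ← nsmul_eq_mul, ← Finset.sum_const]
    refine Finset.sum_le_sum fun l _ => ?_
    have hU := entry_norm_bound_of_unitary hA.isHermitian.eigenvectorUnitary.2
    simp only [mul_diagonal, star_apply, Function.comp_apply, norm_mul, norm_star,
      RCLike.norm_ofReal]
    calc _ ≤ 1 * C * 1 := by gcongr; exacts [hU _ _, hf _, hU _ _]
      _ = C := by ring
  · simpa [cfc_apply_of_not_predicate A hA] using mul_nonneg (Nat.cast_nonneg _) hC

lemma Matrix.integrable_cfc_apply [IsFiniteMeasure μ] {W : α → Matrix n n 𝕜}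
    (hW : ∀ i j, AEStronglyMeasurable (fun x => W x i j) μ)
    (hherm : ∀ᵐ x ∂μ, (W x).IsHermitian) {f : ℝ → ℝ} (hf : Continuous f) {C : ℝ}
    (hC : ∀ t, |f t| ≤ C) (i j : n) : Integrable (fun x => cfc f (W x) i j) μ :=
  .of_bound (aestronglyMeasurable_cfc_apply hW hherm hf i j) _
    (Eventually.of_forall fun x => norm_cfc_apply_le (W x) hC i j)

end Measurability

section Averages

variable {n 𝕜 α : Type*} [Fintype n] [RCLike 𝕜] [MeasurableSpace α] {μ : Measure α}

def matrixIntegral (μ : Measure α) (F : α → Matrix n n 𝕜) : Matrix n n 𝕜 :=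
  Matrix.of fun i j => ∫ x, F x i j ∂μ

lemma integrable_trace_mul (M : Matrix n n 𝕜) {F : α → Matrix n n 𝕜}
    (hF : ∀ i j, Integrable (fun x => F x i j) μ) : Integrable (fun x => (M * F x).trace) μ := by
  simp only [trace, diag_apply, mul_apply]
  exact integrable_finsetSum _ fun i _ => integrable_finsetSum _ fun j _ => (hF j i).const_mul _

lemma trace_mul_matrixIntegral (M : Matrix n n 𝕜) {F : α → Matrix n n 𝕜}
    (hF : ∀ i j, Integrable (fun x => F x i j) μ) :
    (M * matrixIntegral μ F).trace = ∫ x, (M * F x).trace ∂μ := by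
  simp only [trace, diag_apply, mul_apply, matrixIntegral, of_apply]
  refine ((integral_finsetSum _ fun i _ => ?_).trans (Finset.sum_congr rfl fun i _ => ?_)).symm
  · exact integrable_finsetSum _ fun j _ => (hF j i).const_mul _
  · rw [integral_finsetSum _ fun j _ => (hF j i).const_mul _]
    simp only [integral_const_mul]

lemma re_trace_mul_matrixIntegral (M : Matrix n n 𝕜) {F : α → Matrix n n 𝕜}
    (hF : ∀ i j, Integrable (fun x => F x i j) μ) :
    RCLike.re (M * matrixIntegral μ F).trace = ∫ x, RCLike.re (M * F x).trace ∂μ := by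
  rw [trace_mul_matrixIntegral M hF, integral_re (integrable_trace_mul M hF)]

lemma re_trace_mul_matrixIntegral_le [IsProbabilityMeasure μ] {F G : α → Matrix n n 𝕜}
    {M N : Matrix n n 𝕜} (hF : ∀ i j, Integrable (fun x => F x i j) μ)
    (hG : ∀ i j, Integrable (fun x => G x i j) μ) {c : ℝ}
    (h : ∀ᵐ x ∂μ, RCLike.re (M * F x).trace ≤ c + RCLike.re (N * G x).trace) :
    RCLike.re (M * matrixIntegral μ F).trace ≤ c + RCLike.re (N * matrixIntegral μ G).trace := by
  have hG' := (integrable_trace_mul N hG).re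
  rw [re_trace_mul_matrixIntegral M hF, re_trace_mul_matrixIntegral N hG]
  calc _ ≤ ∫ x, (c + RCLike.re (N * G x).trace) ∂μ :=
        integral_mono_ae (integrable_trace_mul M hF).re ((integrable_const c).add hG') h
    _ = _ := by rw [integral_add (integrable_const c) hG', integral_const, probReal_univ, one_smul]

lemma re_trace_matrixIntegral_mul_le [IsProbabilityMeasure μ] {F G A B : α → Matrix n n 𝕜}
    (hF : ∀ i j, Integrable (fun x => F x i j) μ) (hG : ∀ i j, Integrable (fun x => G x i j) μ)
    (hA : ∀ i j, Integrable (fun x => A x i j) μ) (hB : ∀ i j, Integrable (fun x => B x i j) μ)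
    {c : ℝ} (h : ∀ᵐ x ∂μ, ∀ᵐ y ∂μ, RCLike.re (F x * G y).trace ≤ c + RCLike.re (A x * B y).trace) :
    RCLike.re (matrixIntegral μ F * matrixIntegral μ G).trace
      ≤ c + RCLike.re (matrixIntegral μ A * matrixIntegral μ B).trace := by
  rw [trace_mul_comm, trace_mul_comm (matrixIntegral μ A)]
  refine re_trace_mul_matrixIntegral_le hF hA ?_
  filter_upwards [h] with x hx
  rw [trace_mul_comm, trace_mul_comm _ (A x)]
  exact re_trace_mul_matrixIntegral_le hG hB hx

end Averages

lemma truncW_eq_cfc {d : ℕ} (W : ℝ → Mat d) (m : ℕ) (x : ℝ) :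
    truncW W m x = cfc (clampFun m) (W x) := by
  by_cases h : (W x).IsHermitian
  · rw [truncW, dif_pos h, h.cfc_eq]
  · rw [truncW, dif_neg h, cfc_apply_of_not_predicate (W x) (show ¬IsSelfAdjoint (W x) from h)]

lemma avgI_eq_matrixIntegral_cond {d : ℕ} (W : ℝ → Mat d) {a b : ℝ} (hab : a < b) :
    avgI W a b = matrixIntegral volume[|Set.Ico a b] W := by
  ext i j
  rw [avgI, matrixIntegral, of_apply, of_apply, ProbabilityTheory.cond, integral_smul_measure,
    Real.volume_Ico, ENNReal.toReal_inv, ENNReal.toReal_ofReal (sub_pos.2 hab).le]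

lemma MeasureTheory.LocallyIntegrable.integrable_cond_Ico {E : Type*} [NormedAddCommGroup E]
    {f : ℝ → E} (hf : LocallyIntegrable f) {a b : ℝ} (hab : a < b) :
    Integrable f volume[|Set.Ico a b] :=
  ((hf.integrableOn_isCompact isCompact_Icc).mono_set Set.Ico_subset_Icc_self).smul_measure
    (by simp [hab])

lemma inv_truncW_eq_cfc {d m : ℕ} (hm : 0 < m) (W : ℝ → Mat d) (x : ℝ) :
    (truncW W m x)⁻¹ = cfc (fun t => (clampFun m t)⁻¹) (W x) := by
  rw [truncW_eq_cfc, inv_cfc_eq_cfc_inv _ continuous_clampFun fun t => (clampFun_pos hm t).ne']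

section TruncatedWeight

variable {d m : ℕ} {μ : Measure ℝ} [IsFiniteMeasure μ] {W : ℝ → Mat d}

lemma integrable_truncW_apply (hm : 0 < m)
    (hW : ∀ i j, AEStronglyMeasurable (fun x => W x i j) μ)
    (hherm : ∀ᵐ x ∂μ, (W x).IsHermitian) (i j : Fin d) :
    Integrable (fun x => truncW W m x i j) μ := by
  simp only [truncW_eq_cfc]
  exact integrable_cfc_apply hW hherm continuous_clampFun (abs_clampFun_le hm) i j

lemma integrable_inv_truncW_apply (hm : 0 < m)
    (hW : ∀ i j, AEStronglyMeasurable (fun x => W x i j) μ)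
    (hherm : ∀ᵐ x ∂μ, (W x).IsHermitian) (i j : Fin d) :
    Integrable (fun x => (truncW W m x)⁻¹ i j) μ := by
  simp only [inv_truncW_eq_cfc hm]
  exact integrable_cfc_apply hW hherm (continuous_clampFun.inv₀ fun t => (clampFun_pos hm t).ne')
    (abs_inv_clampFun_le hm) i j

end TruncatedWeight

/-- **Trace comparison for the truncated weight**:
`Tr(⟨W_m⟩_I ⟨W_m⁻¹⟩_I) ≤ 2d + Tr(⟨W⟩_I ⟨W⁻¹⟩_I)`. -/
theorem truncation_trace_bound (d : ℕ) (W : ℝ → Mat d) (K : ℝ)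
    (hW : IsA2Weight W K) (m : ℕ) (hm : 1 ≤ m) (a b : ℝ) (hab : a < b) :
    (Matrix.trace (avgI (truncW W m) a b *
        avgI (fun x => (truncW W m x)⁻¹) a b)).re
      ≤ 2 * (d : ℝ) +
        (Matrix.trace (avgI W a b * avgI (fun x => (W x)⁻¹) a b)).re := by
  obtain ⟨⟨hWloc, hWpsd⟩, hWdet, ⟨hWinvloc, -⟩, -⟩ := hW
  set μ := volume[|Set.Ico a b]
  have : IsProbabilityMeasure μ :=
    ProbabilityTheory.cond_isProbabilityMeasure_of_finite (by simp [hab]) (by simp)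
  have hWμ i j := (hWloc i j).integrable_cond_Ico hab
  have hWinvμ i j := (hWinvloc i j).integrable_cond_Ico hab
  have hmeas i j := (hWμ i j).aestronglyMeasurable
  have hpsd : ∀ᵐ x ∂μ, (W x).PosSemidef ∧ IsUnit (W x).det :=
    ProbabilityTheory.cond_absolutelyContinuous.ae_le (hWpsd.and hWdet)
  have hherm : ∀ᵐ x ∂μ, (W x).IsHermitian := hpsd.mono fun x hx => hx.1.1
  simp only [avgI_eq_matrixIntegral_cond _ hab]
  refine (re_trace_matrixIntegral_mul_le (integrable_truncW_apply hm hmeas hherm)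
    (integrable_inv_truncW_apply hm hmeas hherm) hWμ hWinvμ (c := d) ?_).trans ?_
  · filter_upwards [hpsd] with x hx
    filter_upwards [hpsd] with y hy
    simpa [truncW_eq_cfc] using
      hx.1.re_trace_cfc_clampFun_mul_inv_le hm hy.1 ((isUnit_iff_isUnit_det _).2 hy.2)
  · simp only [RCLike.re_to_complex]
    linarith [d.cast_nonneg (α := ℝ)]

end
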